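/- arXiv:math-ph/0208020 — 2 statements merged into one kernel-verified Lean document; each statement's English description precedes it below -/
import Mathlib

section
/- The subalgebra of polynomials in ℝ[p,q] (polynomials in two variables over ℝ) that are invariant under the algebra automorphism determined by p ↦ −p, q ↦ −q is exactly the ℝ-subalgebra generated by the three polynomials p² + q², p² − q², and 2pq; that is, a polynomial f satisfies f(−p,−q) = f(p,q) if and only if f lies in the subalgebra generated by {p² + q², p² − q², 2pq}. -/
/-!
Write `ε` for the substitution `Xᵢ ↦ -Xᵢ` and `A` for the subalgebra generated by the
quadratic monomials `Xᵢ Xⱼ`. Induction on `f` (constants, sums, multiplication by a variable)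
shows that `f + ε f ∈ A` and `Xₖ (f - ε f) ∈ A` for all `k`: multiplying by `Xᵢ` swaps the
two parts, up to the factor `Xᵢ`. Hence an invariant `f` satisfies `2 f ∈ A`, and `A` is
clearly invariant. In two variables, `A` is generated by `p² + q²`, `p² - q²` and `2pq` once
`2` is invertible.
-/

open MvPolynomial

namespace MvPolynomial

variable {R σ : Type*} [CommRing R]

def quadraticMonomials : Set (MvPolynomial σ R) :=
  Set.range fun ij : σ × σ => X ij.1 * X ij.2

theorem X_mul_X_mem_adjoin_quadraticMonomials (i j : σ) :
    X i * X j ∈ Algebra.adjoin R (quadraticMonomials : Set (MvPolynomial σ R)) :=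
  Algebra.subset_adjoin ⟨(i, j), rfl⟩

theorem add_aeval_neg_X_mem_adjoin_quadraticMonomials (f : MvPolynomial σ R) :
    f + aeval (fun i => -X i) f ∈
        Algebra.adjoin R (quadraticMonomials : Set (MvPolynomial σ R)) ∧
      ∀ k, X k * (f - aeval (fun i => -X i) f) ∈
        Algebra.adjoin R (quadraticMonomials : Set (MvPolynomial σ R)) := by
  set A := Algebra.adjoin R (quadraticMonomials : Set (MvPolynomial σ R))
  induction f using MvPolynomial.induction_on with
  | C r =>
    refine ⟨?_, fun k => by simp⟩
    rw [aeval_C]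
    exact A.add_mem (A.algebraMap_mem r) (A.algebraMap_mem r)
  | add f g hf hg =>
    refine ⟨?_, fun k => ?_⟩
    · simpa only [map_add, add_add_add_comm] using A.add_mem hf.1 hg.1
    · simpa only [map_add, add_sub_add_comm, mul_add] using A.add_mem (hf.2 k) (hg.2 k)
  | mul_X f i hf =>
    refine ⟨?_, fun k => ?_⟩
    · have h : f * X i + aeval (fun i => -X i) (f * X i) =
          X i * (f - aeval (fun i => -X i) f) := by
        simp only [map_mul, aeval_X]; ring
      exact h ▸ hf.2 i
    · have h : X k * (f * X i - aeval (fun i => -X i) (f * X i)) =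
          X k * X i * (f + aeval (fun i => -X i) f) := by
        simp only [map_mul, aeval_X]; ring
      exact h ▸ A.mul_mem (X_mul_X_mem_adjoin_quadraticMonomials k i) hf.1

theorem aeval_neg_X_eq_self_iff_mem_adjoin_quadraticMonomials [Invertible (2 : R)]
    (f : MvPolynomial σ R) :
    aeval (fun i => -X i) f = f ↔
      f ∈ Algebra.adjoin R (quadraticMonomials : Set (MvPolynomial σ R)) := by
  constructor
  · intro hf
    have h2f := (add_aeval_neg_X_mem_adjoin_quadraticMonomials f).1
    rw [hf, ← two_smul R f] at h2f
    simpa [smul_smul] using Subalgebra.smul_mem _ h2f (⅟2 : R)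
  · intro hf
    suffices Algebra.adjoin R quadraticMonomials ≤
        AlgHom.equalizer (aeval fun i => -X i) (AlgHom.id R (MvPolynomial σ R)) from this hf
    refine Algebra.adjoin_le ?_
    rintro _ ⟨⟨i, j⟩, rfl⟩
    simp

theorem adjoin_quadraticMonomials_fin_two [Invertible (2 : R)] :
    Algebra.adjoin R (quadraticMonomials : Set (MvPolynomial (Fin 2) R)) =
      Algebra.adjoin R {X 0 ^ 2 + X 1 ^ 2, X 0 ^ 2 - X 1 ^ 2, 2 * (X 0 * X 1)} := by
  set B := Algebra.adjoin R {(X 0 ^ 2 + X 1 ^ 2 : MvPolynomial (Fin 2) R), X 0 ^ 2 - X 1 ^ 2,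
    2 * (X 0 * X 1)}
  have hsum : X 0 ^ 2 + X 1 ^ 2 ∈ B := Algebra.subset_adjoin (by simp)
  have hdiff : X 0 ^ 2 - X 1 ^ 2 ∈ B := Algebra.subset_adjoin (by simp)
  have hprod : 2 * (X 0 * X 1) ∈ B := Algebra.subset_adjoin (by simp)
  have half : (C ⅟2 : MvPolynomial (Fin 2) R) * 2 = 1 := by
    rw [← map_ofNat C 2, ← C_mul, invOf_mul_self, C_1]
  have hC : C ⅟2 ∈ B := B.algebraMap_mem _
  apply le_antisymm
  · refine Algebra.adjoin_le ?_
    rintro _ ⟨⟨i, j⟩, rfl⟩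
    fin_cases i <;> fin_cases j <;> simp only [Fin.zero_eta, Fin.mk_one, SetLike.mem_coe]
    · convert B.mul_mem hC (B.add_mem hsum hdiff) using 1
      linear_combination (-(X 0 ^ 2 : MvPolynomial (Fin 2) R)) * half
    · convert B.mul_mem hC hprod using 1
      linear_combination (-(X 0 * X 1 : MvPolynomial (Fin 2) R)) * half
    · convert B.mul_mem hC hprod using 1
      linear_combination (-(X 0 * X 1 : MvPolynomial (Fin 2) R)) * half
    · convert B.mul_mem hC (B.sub_mem hsum hdiff) using 1
      linear_combination (-(X 1 ^ 2 : MvPolynomial (Fin 2) R)) * half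
  · have h00 := X_mul_X_mem_adjoin_quadraticMonomials (R := R) (0 : Fin 2) 0
    have h11 := X_mul_X_mem_adjoin_quadraticMonomials (R := R) (1 : Fin 2) 1
    have h01 := X_mul_X_mem_adjoin_quadraticMonomials (R := R) (0 : Fin 2) 1
    rw [← sq] at h00 h11
    rw [Algebra.adjoin_le_iff, Set.insert_subset_iff, Set.insert_subset_iff,
      Set.singleton_subset_iff]
    exact ⟨Subalgebra.add_mem _ h00 h11, Subalgebra.sub_mem _ h00 h11,
      Subalgebra.mul_mem _ (Subalgebra.algebraMap_mem _ 2) h01⟩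

end MvPolynomial

/-- A polynomial `f ∈ ℝ[p,q]` is invariant under the algebra automorphism determined by
`p ↦ -p`, `q ↦ -q` if and only if it lies in the ℝ-subalgebra generated by the three
polynomials `p² + q²`, `p² − q²` and `2pq`. -/
theorem even_polynomial_invariants (f : MvPolynomial (Fin 2) ℝ) :
    MvPolynomial.aeval (fun i => -(MvPolynomial.X i : MvPolynomial (Fin 2) ℝ)) f = f ↔
      f ∈ Algebra.adjoin ℝ
        ({(X 0 : MvPolynomial (Fin 2) ℝ) ^ 2 + X 1 ^ 2,
          (X 0 : MvPolynomial (Fin 2) ℝ) ^ 2 - X 1 ^ 2,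
          2 * ((X 0 : MvPolynomial (Fin 2) ℝ) * X 1)} : Set (MvPolynomial (Fin 2) ℝ)) := by
  rw [aeval_neg_X_eq_self_iff_mem_adjoin_quadraticMonomials, adjoin_quadraticMonomials_fin_two]
end

section
/- The Moyal–Weyl product preserves ℤ₂-invariance: if f, g : ℝ² → ℂ are smooth and even, i.e. f(−v) = f(v) and g(−v) = g(v) for all v ∈ ℝ², then for every k ∈ ℕ the function B_k(f,g) is even as well; consequently the set of formal power series in C^∞(ℝ², ℂ)[[λ]] all of whose coefficient functions are even is a ℂ[[λ]]-subalgebra with respect to ★, so the Moyal–Weyl product restricts to an associative product on C^∞(ℝ²)^{ℤ₂}[[λ]]. -/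
open Complex

/-- Partial derivative `∂_p` (with respect to the first coordinate) of a function on `ℝ²`. -/
noncomputable def dp (f : ℝ × ℝ → ℂ) : ℝ × ℝ → ℂ :=
  fun v => fderiv ℝ f v (1, 0)

/-- Partial derivative `∂_q` (with respect to the second coordinate) of a function on `ℝ²`. -/
noncomputable def dq (f : ℝ × ℝ → ℂ) : ℝ × ℝ → ℂ :=
  fun v => fderiv ℝ f v (0, 1)

/-- The `k`-th Moyal bidifferential operator
`B_k(f,g) = Σ_{j=0}^{k} (−1)^j (k choose j) (∂_q^{k−j} ∂_p^{j} f) · (∂_p^{k−j} ∂_q^{j} g)`,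
the `k`-th iterate of `Π̂ = ∂_q ⊗ ∂_p − ∂_p ⊗ ∂_q` followed by pointwise multiplication. -/
noncomputable def moyalB (k : ℕ) (f g : ℝ × ℝ → ℂ) : ℝ × ℝ → ℂ :=
  ∑ j ∈ Finset.range (k + 1),
    (((-1 : ℂ) ^ j * (k.choose j : ℂ)) •
      (dq^[k - j] (dp^[j] f) * dp^[k - j] (dq^[j] g)))

/-- The Moyal–Weyl product on `C^∞(ℝ²,ℂ)[[λ]]`, with a formal power series represented by
its sequence of coefficient functions: it is the `ℂ[[λ]]`-bilinear extension of
`f ★ g = Σ_{k≥0} ((−i)^k / k!) B_k(f,g) λ^k`. -/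
noncomputable def moyal (a b : ℕ → (ℝ × ℝ → ℂ)) : ℕ → (ℝ × ℝ → ℂ) :=
  fun n => ∑ p ∈ Finset.HasAntidiagonal.antidiagonal n, ∑ q ∈ Finset.HasAntidiagonal.antidiagonal p.2,
    (((-Complex.I) ^ p.1 / (p.1.factorial : ℂ)) • moyalB p.1 (a q.1) (b q.2))

/-- The unit of the Moyal–Weyl algebra: the constant function `1`. -/
noncomputable def moyalOne : ℕ → (ℝ × ℝ → ℂ) :=
  fun n => if n = 0 then (fun _ => 1) else 0

/-- A smooth function regarded as a formal power series (concentrated in degree `0`). -/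
noncomputable def ofFun (f : ℝ × ℝ → ℂ) : ℕ → (ℝ × ℝ → ℂ) :=
  fun n => if n = 0 then f else 0

lemma contDiff_dp {f : ℝ × ℝ → ℂ} (hf : ContDiff ℝ (⊤ : ℕ∞) f) : ContDiff ℝ (⊤ : ℕ∞) (dp f) :=
  (hf.fderiv_right (by simp)).clm_apply contDiff_const

lemma contDiff_dq {f : ℝ × ℝ → ℂ} (hf : ContDiff ℝ (⊤ : ℕ∞) f) : ContDiff ℝ (⊤ : ℕ∞) (dq f) :=
  (hf.fderiv_right (by simp)).clm_apply contDiff_const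

lemma fderiv_parity {f : ℝ × ℝ → ℂ} (hf : ContDiff ℝ (⊤ : ℕ∞) f) {c : ℂ}
    (h : ∀ v, f (-v) = c * f v) (v : ℝ × ℝ) (w : ℝ × ℝ) :
    fderiv ℝ f (-v) w = -c * fderiv ℝ f v w := by
  have hdf : Differentiable ℝ f := hf.differentiable (by simp)
  have h1 : (fun v : ℝ × ℝ => f (-v)) = fun v => c * f v := funext h
  have h2 : fderiv ℝ (fun v : ℝ × ℝ => f (-v)) v = c • fderiv ℝ f v := by
    rw [h1, fderiv_const_mul (hdf v) c]
  have h3 : fderiv ℝ (fun v : ℝ × ℝ => f (-v)) v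
      = (fderiv ℝ f (-v)).comp (fderiv ℝ (fun v : ℝ × ℝ => -v) v) := by
    exact fderiv_comp v (hdf (-v)) (differentiable_id.neg v)
  have h4 : fderiv ℝ (fun v : ℝ × ℝ => -v) v = -ContinuousLinearMap.id ℝ (ℝ × ℝ) := by
    rw [fderiv_fun_neg, fderiv_id']
  have h5 := h3.symm.trans h2
  rw [h4] at h5
  have h6 := congrArg (fun L : (ℝ × ℝ) →L[ℝ] ℂ => L w) h5
  simp at h6
  linear_combination -h6

lemma dp_parity {f : ℝ × ℝ → ℂ} (hf : ContDiff ℝ (⊤ : ℕ∞) f) {c : ℂ}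
    (h : ∀ v, f (-v) = c * f v) (v : ℝ × ℝ) : dp f (-v) = -c * dp f v :=
  fderiv_parity hf h v (1, 0)

lemma dq_parity {f : ℝ × ℝ → ℂ} (hf : ContDiff ℝ (⊤ : ℕ∞) f) {c : ℂ}
    (h : ∀ v, f (-v) = c * f v) (v : ℝ × ℝ) : dq f (-v) = -c * dq f v :=
  fderiv_parity hf h v (0, 1)

lemma dp_iter_parity {f : ℝ × ℝ → ℂ} (hf : ContDiff ℝ (⊤ : ℕ∞) f) {c : ℂ}
    (h : ∀ v, f (-v) = c * f v) (j : ℕ) :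
    ContDiff ℝ (⊤ : ℕ∞) (dp^[j] f) ∧ ∀ v, dp^[j] f (-v) = (-1 : ℂ) ^ j * c * dp^[j] f v := by
  induction j with
  | zero =>
    simp only [Function.iterate_zero, id_eq, pow_zero, one_mul]
    exact ⟨hf, h⟩
  | succ j ih =>
    rw [Function.iterate_succ_apply']
    refine ⟨contDiff_dp ih.1, fun v => ?_⟩
    have h2 : ∀ v, dp^[j] f (-v) = ((-1 : ℂ) ^ j * c) * dp^[j] f v := ih.2
    have := dp_parity ih.1 h2 v
    rw [this]; ring

lemma dq_iter_parity {f : ℝ × ℝ → ℂ} (hf : ContDiff ℝ (⊤ : ℕ∞) f) {c : ℂ}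
    (h : ∀ v, f (-v) = c * f v) (j : ℕ) :
    ContDiff ℝ (⊤ : ℕ∞) (dq^[j] f) ∧ ∀ v, dq^[j] f (-v) = (-1 : ℂ) ^ j * c * dq^[j] f v := by
  induction j with
  | zero =>
    simp only [Function.iterate_zero, id_eq, pow_zero, one_mul]
    exact ⟨hf, h⟩
  | succ j ih =>
    rw [Function.iterate_succ_apply']
    refine ⟨contDiff_dq ih.1, fun v => ?_⟩
    have h2 : ∀ v, dq^[j] f (-v) = ((-1 : ℂ) ^ j * c) * dq^[j] f v := ih.2
    have := dq_parity ih.1 h2 v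
    rw [this]; ring

lemma moyalB_even {f g : ℝ × ℝ → ℂ} (hf : ContDiff ℝ (⊤ : ℕ∞) f) (hg : ContDiff ℝ (⊤ : ℕ∞) g)
    (hfe : ∀ v : ℝ × ℝ, f (-v) = f v) (hge : ∀ v : ℝ × ℝ, g (-v) = g v)
    (k : ℕ) (v : ℝ × ℝ) : moyalB k f g (-v) = moyalB k f g v := by
  have hfe' : ∀ v : ℝ × ℝ, f (-v) = (1 : ℂ) * f v := by simpa using hfe
  have hge' : ∀ v : ℝ × ℝ, g (-v) = (1 : ℂ) * g v := by simpa using hge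
  unfold moyalB
  rw [Finset.sum_apply, Finset.sum_apply]
  refine Finset.sum_congr rfl fun j hj => ?_
  have hjk : j ≤ k := Nat.lt_succ_iff.mp (Finset.mem_range.mp hj)
  have hA := dq_iter_parity (dp_iter_parity hf hfe' j).1 (dp_iter_parity hf hfe' j).2 (k - j)
  have hB := dp_iter_parity (dq_iter_parity hg hge' j).1 (dq_iter_parity hg hge' j).2 (k - j)
  simp only [Pi.smul_apply, Pi.mul_apply, smul_eq_mul]
  rw [hA.2 v, hB.2 v]
  have h1 : ((-1 : ℂ)) ^ (k - j) * ((-1 : ℂ) ^ j * 1) = (-1 : ℂ) ^ k := by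
    rw [mul_one, ← pow_add, Nat.sub_add_cancel hjk]
  have hs : ((-1 : ℂ) ^ (k - j) * ((-1 : ℂ) ^ j * 1)) *
      ((-1 : ℂ) ^ (k - j) * ((-1 : ℂ) ^ j * 1)) = 1 := by
    rw [h1, ← pow_add, ← two_mul, pow_mul]
    norm_num
  linear_combination ((-1 : ℂ) ^ j * (k.choose j : ℂ) *
    dq^[k - j] (dp^[j] f) v * dp^[k - j] (dq^[j] g) v) * hs

/-- The Moyal–Weyl product preserves `ℤ₂`-invariance: if `f, g` are smooth and even then
every `B_k(f,g)` is even; consequently formal power series with even smooth coefficient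
functions are closed under the Moyal–Weyl product `★`, so `★` restricts to an associative
product on `C^∞(ℝ²)^{ℤ₂}[[λ]]`. -/
theorem moyal_preserves_even :
    (∀ f g : ℝ × ℝ → ℂ, ContDiff ℝ (⊤ : ℕ∞) f → ContDiff ℝ (⊤ : ℕ∞) g →
      (∀ v : ℝ × ℝ, f (-v) = f v) → (∀ v : ℝ × ℝ, g (-v) = g v) →
      ∀ (k : ℕ) (v : ℝ × ℝ), moyalB k f g (-v) = moyalB k f g v) ∧
    (∀ a b : ℕ → (ℝ × ℝ → ℂ),
      (∀ n, ContDiff ℝ (⊤ : ℕ∞) (a n)) → (∀ n, ContDiff ℝ (⊤ : ℕ∞) (b n)) →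
      (∀ (n : ℕ) (v : ℝ × ℝ), a n (-v) = a n v) →
      (∀ (n : ℕ) (v : ℝ × ℝ), b n (-v) = b n v) →
      ∀ (n : ℕ) (v : ℝ × ℝ), moyal a b n (-v) = moyal a b n v) := by
  constructor
  · exact fun f g hf hg hfe hge k v => moyalB_even hf hg hfe hge k v
  · intro a b ha hb hae hbe n v
    unfold moyal
    rw [Finset.sum_apply, Finset.sum_apply]
    refine Finset.sum_congr rfl fun p _ => ?_
    rw [Finset.sum_apply, Finset.sum_apply]
    refine Finset.sum_congr rfl fun q _ => ?_
    simp only [Pi.smul_apply, smul_eq_mul]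
    rw [moyalB_even (ha q.1) (hb q.2) (hae q.1) (hbe q.2) p.1 v]
end
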